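/- arXiv:2302.09383 — 4 statements merged into one kernel-verified Lean document; each statement's English description precedes it below -/
import Mathlib

section
/- Let n ≥ 2 and let F ≠ 0 be a multilinear polynomial in ℂ[X_1,…,X_n] such that for every j ∈ {1,…,n} the variable X_j occurs in F but X_j does not divide F. If F splits across some nontrivial bipartition (E,E'), then the number t of monomials of F is composite: there exist t₁ ≥ 2 and t₂ ≥ 2 with t = t₁·t₂. -/
open MvPolynomial Finset
open scoped Pointwise

/-!
If `F = p * q` with `p` and `q` in disjoint sets of variables, every monomial of `F` is, in exactly
one way, the product of a monomial of `p` and one of `q`, so `F` has `#p.support * #q.support`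
monomials. Neither factor is a monomial: a factor carrying a variable `X j` in its only monomial
would make `X j` divide `F`.
-/

namespace MvPolynomial

variable {R σ : Type*} [CommSemiring R]

theorem two_le_card_support_of_mem_vars_of_not_X_dvd {p : MvPolynomial σ R} {j : σ}
    (hj : j ∈ p.vars) (hdvd : ¬ X j ∣ p) : 2 ≤ #p.support := by
  obtain ⟨d, hd, hjd⟩ := (mem_vars_iff_mem_support j).mp hj
  by_contra! hlt
  have hsingle : ∀ e ∈ p.support, e = d := fun e he =>
    Finset.card_le_one.mp (by omega) e he d hd
  rw [eq_monomial_of_support_subset_singleton hsingle, X_dvd_monomial] at hdvd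
  exact hdvd (Or.inr (Finsupp.mem_support_iff.mp hjd))

theorem uniqueAdd_support_of_disjoint_vars {p q : MvPolynomial σ R} (h : Disjoint p.vars q.vars)
    {a b : σ →₀ ℕ} (ha : a ∈ p.support) (hb : b ∈ q.support) :
    UniqueAdd p.support q.support a b := by
  intro a' b' ha' hb' hsum
  have hleft : a' = a := by
    ext i
    by_cases hi : i ∈ p.vars
    · have hiq : i ∉ q.vars := h.notMem_of_mem_left_finset hi
      simpa [mem_support_notMem_vars_zero hb' hiq, mem_support_notMem_vars_zero hb hiq]
        using DFunLike.congr_fun hsum i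
    · rw [mem_support_notMem_vars_zero ha' hi, mem_support_notMem_vars_zero ha hi]
  subst hleft
  exact ⟨rfl, add_left_cancel hsum⟩

theorem support_mul_of_disjoint_vars [DecidableEq σ] [NoZeroDivisors R] {p q : MvPolynomial σ R}
    (h : Disjoint p.vars q.vars) : (p * q).support = p.support + q.support := by
  refine (support_mul p q).antisymm fun m hm => ?_
  obtain ⟨a, ha, b, hb, rfl⟩ := Finset.mem_add.mp hm
  have hcoeff : coeff (a + b) (p * q) = coeff a p * coeff b q :=
    AddMonoidAlgebra.coeff_mul_add_of_uniqueAdd (uniqueAdd_support_of_disjoint_vars h ha hb)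
  rw [mem_support_iff, hcoeff]
  exact mul_ne_zero (mem_support_iff.mp ha) (mem_support_iff.mp hb)

theorem card_support_mul_of_disjoint_vars [NoZeroDivisors R] {p q : MvPolynomial σ R}
    (h : Disjoint p.vars q.vars) : #(p * q).support = #p.support * #q.support := by
  classical
  rw [support_mul_of_disjoint_vars h, card_add_iff]
  rintro ⟨a, b⟩ hab ⟨c, d⟩ hcd hsum
  simp only [Set.mem_prod, mem_coe] at hab hcd
  obtain ⟨rfl, rfl⟩ := uniqueAdd_support_of_disjoint_vars h hcd.1 hcd.2 hab.1 hab.2 hsum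
  rfl

end MvPolynomial

theorem stmt_1_general (n : ℕ) (F : MvPolynomial (Fin n) ℂ)
    (hvars : ∀ j, j ∈ F.vars)
    (hndvd : ∀ j, ¬ (X j ∣ F))
    (E : Finset (Fin n)) (hE : E.Nonempty) (hE' : E ≠ Finset.univ)
    (hsplit : ∃ p q : MvPolynomial (Fin n) ℂ, F = p * q ∧ p.vars ⊆ E ∧ q.vars ⊆ Eᶜ) :
    ∃ t₁ t₂ : ℕ, 2 ≤ t₁ ∧ 2 ≤ t₂ ∧ F.support.card = t₁ * t₂ := by
  obtain ⟨p, q, rfl, hpE, hqE⟩ := hsplit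
  obtain ⟨j, hj⟩ := hE
  obtain ⟨k, -, hk⟩ := exists_of_ssubset (ssubset_univ_iff.mpr hE')
  have hjp : j ∈ p.vars :=
    (mem_union.mp (vars_mul p q (hvars j))).resolve_right fun h => mem_compl.mp (hqE h) hj
  have hkq : k ∈ q.vars :=
    (mem_union.mp (vars_mul p q (hvars k))).resolve_left fun h => hk (hpE h)
  refine ⟨#p.support, #q.support, ?_, ?_,
    card_support_mul_of_disjoint_vars (disjoint_compl_right.mono hpE hqE)⟩
  · exact two_le_card_support_of_mem_vars_of_not_X_dvd hjp fun h => hndvd j (h.mul_right q)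
  · exact two_le_card_support_of_mem_vars_of_not_X_dvd hkq fun h => hndvd k (h.mul_left p)

/-- Theorem 2.1(ii)(c): for a nonzero multilinear polynomial `F`
in which every variable occurs but no variable is a factor, if `F` splits across
some nontrivial bipartition then its number of monomials is composite. -/
theorem stmt_1 (n : ℕ) (hn : 2 ≤ n) (F : MvPolynomial (Fin n) ℂ) (hF : F ≠ 0)
    (hml : ∀ j, F.degreeOf j ≤ 1)
    (hvars : ∀ j, j ∈ F.vars)
    (hndvd : ∀ j, ¬ (X j ∣ F))
    (E : Finset (Fin n)) (hE : E.Nonempty) (hE' : E ≠ Finset.univ)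
    (hsplit : ∃ p q : MvPolynomial (Fin n) ℂ, F = p * q ∧ p.vars ⊆ E ∧ q.vars ⊆ Eᶜ) :
    ∃ t₁ t₂ : ℕ, 2 ≤ t₁ ∧ 2 ≤ t₂ ∧ F.support.card = t₁ * t₂ :=
  stmt_1_general n F hvars hndvd E hE hE' hsplit
end

section
/- Let n ≥ 2 and let F ≠ 0 be a multilinear polynomial in ℂ[X_1,…,X_n]. Then F splits across no nontrivial bipartition (i.e., the corresponding n-qubit state is genuinely entangled) if and only if every variable X_1,…,X_n occurs in F and F is irreducible in ℂ[X_1,…,X_n]. -/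
/-!
Over a field, the units of `K[X_σ]` are exactly the nonzero constants, i.e. the nonzero polynomials
without variables. Since `degreeOf j` is additive on products of nonzero polynomials, the two
factors of a multilinear polynomial involve disjoint sets of variables; so a factorization into
nonunits is the same thing as a splitting across the nontrivial bipartition `(vars p, (vars p)ᶜ)`.
Conversely, a splitting `F = p * q` of an irreducible `F` across a nontrivial bipartition forces a
constant factor, after which all variables of `F` lie on one side of the cut.
-/

open MvPolynomial Finset

namespace MvPolynomial

variable {σ R K : Type*}

theorem vars_eq_empty_of_isUnit [CommRing R] [IsReduced R] {p : MvPolynomial σ R}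
    (hp : IsUnit p) : p.vars = ∅ := by
  obtain ⟨r, -, rfl⟩ := isUnit_iff_eq_C_of_isReduced.mp hp
  exact vars_C

theorem isUnit_of_vars_eq_empty [Field K] {p : MvPolynomial σ K} (hp : p ≠ 0)
    (h : p.vars = ∅) : IsUnit p := by
  rw [vars_eq_empty_iff_eq_C] at h
  rw [h] at hp ⊢
  exact (isUnit_iff_ne_zero.mpr fun h0 => hp (by rw [h0, C_0])).map C

theorem disjoint_vars_of_degreeOf_mul_le_one [CommSemiring R] [NoZeroDivisors R]
    {p q : MvPolynomial σ R} (hp : p ≠ 0) (hq : q ≠ 0) (h : ∀ j, (p * q).degreeOf j ≤ 1) :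
    Disjoint p.vars q.vars := by
  refine Finset.disjoint_left.mpr fun j hjp hjq => ?_
  have hmul := h j
  rw [degreeOf_mul_eq hp hq] at hmul
  rw [mem_vars_iff_degreeOf_ne_zero] at hjp hjq
  omega

section Bipartition

variable [Fintype σ] [DecidableEq σ]

def SplitsAcross [CommSemiring R] (F : MvPolynomial σ R) (E : Finset σ) : Prop :=
  ∃ p q : MvPolynomial σ R, F = p * q ∧ p.vars ⊆ E ∧ q.vars ⊆ Eᶜ

theorem splitsAcross_of_vars_subset_compl [CommSemiring R] {F : MvPolynomial σ R}
    {E : Finset σ} (h : F.vars ⊆ Eᶜ) : SplitsAcross F E :=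
  ⟨1, F, (one_mul F).symm, by simp, h⟩

theorem splitsAcross_vars_of_disjoint [CommSemiring R] {p q : MvPolynomial σ R}
    (h : Disjoint p.vars q.vars) : SplitsAcross (p * q) p.vars :=
  ⟨p, q, rfl, subset_rfl, fun _ hj => mem_compl.mpr (disjoint_right.mp h hj)⟩

theorem mem_vars_of_forall_not_splitsAcross [Nontrivial σ] [CommSemiring R]
    {F : MvPolynomial σ R} (h : ∀ E : Finset σ, E.Nonempty → E ≠ univ → ¬ SplitsAcross F E)
    (j : σ) : j ∈ F.vars := by
  by_contra hj
  refine h {j} (singleton_nonempty j) (singleton_ne_univ j)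
    (splitsAcross_of_vars_subset_compl fun k hk => ?_)
  rw [mem_compl, mem_singleton]
  rintro rfl
  exact hj hk

theorem not_splitsAcross_of_irreducible [CommRing R] [IsReduced R] {F : MvPolynomial σ R}
    (hF : Irreducible F) (hvars : ∀ j, j ∈ F.vars) {E : Finset σ} (hE : E.Nonempty)
    (hEu : E ≠ univ) : ¬ SplitsAcross F E := by
  rintro ⟨p, q, rfl, hpE, hqE⟩
  rcases hF.isUnit_or_isUnit rfl with hu | hu
  · obtain ⟨j, hj⟩ := hE
    have hjq : j ∈ q.vars := by
      simpa [vars_eq_empty_of_isUnit hu] using vars_mul p q (hvars j)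
    exact mem_compl.mp (hqE hjq) hj
  · obtain ⟨j, hj⟩ : ∃ j, j ∉ E := by simpa [eq_univ_iff_forall] using hEu
    have hjp : j ∈ p.vars := by
      simpa [vars_eq_empty_of_isUnit hu] using vars_mul p q (hvars j)
    exact hj (hpE hjp)

theorem irreducible_of_forall_not_splitsAcross [Field K] {F : MvPolynomial σ K}
    (hml : ∀ j, F.degreeOf j ≤ 1) (hvars : F.vars.Nonempty)
    (h : ∀ E : Finset σ, E.Nonempty → E ≠ univ → ¬ SplitsAcross F E) : Irreducible F := by
  have hF : F ≠ 0 := fun h0 => by simp [h0] at hvars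
  refine ⟨fun hu => hvars.ne_empty (vars_eq_empty_of_isUnit hu), fun p q hpq => ?_⟩
  subst hpq
  by_contra! ⟨hpu, hqu⟩
  have hp : p ≠ 0 := left_ne_zero_of_mul hF
  have hq : q ≠ 0 := right_ne_zero_of_mul hF
  have hpv : p.vars.Nonempty := nonempty_iff_ne_empty.mpr (mt (isUnit_of_vars_eq_empty hp) hpu)
  have hqv : q.vars.Nonempty := nonempty_iff_ne_empty.mpr (mt (isUnit_of_vars_eq_empty hq) hqu)
  have hdisj := disjoint_vars_of_degreeOf_mul_le_one hp hq hml
  have hpuniv : p.vars ≠ univ := fun hpu => by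
    obtain ⟨j, hj⟩ := hqv
    exact disjoint_left.mp hdisj (hpu ▸ mem_univ j) hj
  exact h p.vars hpv hpuniv (splitsAcross_vars_of_disjoint hdisj)

end Bipartition

end MvPolynomial

theorem stmt_2_general (n : ℕ) (hn : 2 ≤ n) (F : MvPolynomial (Fin n) ℂ)
    (hml : ∀ j, F.degreeOf j ≤ 1) :
    (∀ E : Finset (Fin n), E.Nonempty → E ≠ Finset.univ →
        ¬ ∃ p q : MvPolynomial (Fin n) ℂ, F = p * q ∧ p.vars ⊆ E ∧ q.vars ⊆ Eᶜ)
      ↔ ((∀ j, j ∈ F.vars) ∧ Irreducible F) := by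
  have : Nontrivial (Fin n) := Fin.nontrivial_iff_two_le.mpr hn
  refine ⟨fun h => ?_, fun ⟨hvars, hirr⟩ E hE hEu => not_splitsAcross_of_irreducible hirr hvars hE hEu⟩
  have hvars : ∀ j, j ∈ F.vars := mem_vars_of_forall_not_splitsAcross h
  exact ⟨hvars, irreducible_of_forall_not_splitsAcross hml ⟨⟨0, by omega⟩, hvars _⟩ h⟩

/-- Theorem 2.1(iii)(a): a nonzero multilinear polynomial `F`
splits across no nontrivial bipartition iff every variable occurs in `F` and `F`
is irreducible. -/
theorem stmt_2 (n : ℕ) (hn : 2 ≤ n) (F : MvPolynomial (Fin n) ℂ) (hF : F ≠ 0)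
    (hml : ∀ j, F.degreeOf j ≤ 1) :
    (∀ E : Finset (Fin n), E.Nonempty → E ≠ Finset.univ →
        ¬ ∃ p q : MvPolynomial (Fin n) ℂ, F = p * q ∧ p.vars ⊆ E ∧ q.vars ⊆ Eᶜ)
      ↔ ((∀ j, j ∈ F.vars) ∧ Irreducible F) :=
  stmt_2_general n hn F hml
end

section
/- Let F ≠ 0 be a multilinear homogeneous polynomial of degree d in ℂ[X_1,…,X_n], and let t be its number of monomials. For 1 ≤ α ≤ n−1 put τ_α = max{ C(α,d₁)·C(n−α, d−d₁) : max(d−(n−α),0) ≤ d₁ ≤ min(α,d) } (binomial coefficients), and τ = max{ τ_α : 1 ≤ α ≤ n−1 }. (b) If F splits across a nontrivial bipartition (E,E') with #E = α, then t ≤ τ_α. (c) Consequently, if t > τ, then F splits across no nontrivial bipartition (the corresponding state is genuinely entangled). -/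
/-!
If `F = p * q` with `p` and `q` in disjoint sets of variables, every monomial of `F` is uniquely
a product of a monomial of `p` and one of `q`. Hence `p` and `q` are again multilinear and
homogeneous, of degrees `d₁` and `d - d₁`, and `t ≤ #supp p · #supp q`. A multilinear monomial
of degree `k` in the variables of `E` is a `k`-subset of `E`, which gives the binomial bound.
-/

open MvPolynomial Finset
open scoped Pointwise

namespace Finsupp

variable {σ M : Type*}

lemma eq_of_add_eq_add_of_support_subset [AddZeroClass M] {s : Finset σ} {u v a b : σ →₀ M}
    (hu : u.support ⊆ s) (ha : a.support ⊆ s) (hv : Disjoint v.support s)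
    (hb : Disjoint b.support s) (h : u + v = a + b) : u = a := by
  ext i
  have hi := DFunLike.congr_fun h i
  by_cases his : i ∈ s
  · simpa [notMem_support_iff.mp (disjoint_right.mp hv his),
      notMem_support_iff.mp (disjoint_right.mp hb his)] using hi
  · rw [notMem_support_iff.mp (fun h => his (hu h)), notMem_support_iff.mp (fun h => his (ha h))]

lemma eq_of_support_eq_of_le_one {a b : σ →₀ ℕ} (ha : ∀ i, a i ≤ 1) (hb : ∀ i, b i ≤ 1)
    (h : a.support = b.support) : a = b := by
  ext i
  have hi : a i ≠ 0 ↔ b i ≠ 0 := by rw [← mem_support_iff, ← mem_support_iff, h]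
  have := ha i
  have := hb i
  omega

lemma degree_eq_card_support_of_le_one {a : σ →₀ ℕ} (ha : ∀ i, a i ≤ 1) :
    a.degree = #a.support := by
  rw [degree_apply, card_eq_sum_ones]
  refine Finset.sum_congr rfl fun i hi => ?_
  have := mem_support_iff.mp hi
  have := ha i
  omega

end Finsupp

namespace MvPolynomial

variable {σ R : Type*} [CommSemiring R] {p q : MvPolynomial σ R}

lemma coeff_add_mul_of_disjoint_vars (h : Disjoint p.vars q.vars) {a b : σ →₀ ℕ}
    (ha : a.support ⊆ p.vars) (hb : b.support ⊆ q.vars) :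
    coeff (a + b) (p * q) = coeff a p * coeff b q := by
  classical
  rw [coeff_mul]
  refine sum_eq_single_of_mem (a, b) (mem_antidiagonal.mpr rfl) fun x hx hne => ?_
  by_contra hx0
  have hu := support_subset_vars_of_mem_support (mem_support_iff.mpr (left_ne_zero_of_mul hx0))
  have hv := support_subset_vars_of_mem_support (mem_support_iff.mpr (right_ne_zero_of_mul hx0))
  have hsum : x.1 + x.2 = a + b := mem_antidiagonal.mp hx
  have hua : x.1 = a := Finsupp.eq_of_add_eq_add_of_support_subset hu ha
    (h.symm.mono_left hv) (h.symm.mono_left hb) hsum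
  rw [hua] at hsum
  exact hne (Prod.ext hua (add_left_cancel hsum))

lemma add_mem_support_mul_of_disjoint_vars [NoZeroDivisors R] (h : Disjoint p.vars q.vars)
    {a b : σ →₀ ℕ} (ha : a ∈ p.support) (hb : b ∈ q.support) : a + b ∈ (p * q).support := by
  rw [mem_support_iff, coeff_add_mul_of_disjoint_vars h (support_subset_vars_of_mem_support ha)
    (support_subset_vars_of_mem_support hb)]
  exact mul_ne_zero (mem_support_iff.mp ha) (mem_support_iff.mp hb)

lemma IsHomogeneous.exists_isHomogeneous_left_of_disjoint_vars [NoZeroDivisors R] {d : ℕ}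
    (hpq : (p * q).IsHomogeneous d) (h : Disjoint p.vars q.vars) (hq : q ≠ 0) :
    ∃ k, p.IsHomogeneous k := by
  obtain ⟨b, hb⟩ := support_nonempty.mpr hq
  refine ⟨d - Finsupp.weight 1 b, fun {a} ha => ?_⟩
  have hab := hpq (mem_support_iff.mp
    (add_mem_support_mul_of_disjoint_vars h (mem_support_iff.mpr ha) hb))
  rw [map_add] at hab
  omega

lemma card_support_le_choose [DecidableEq σ] {E : Finset σ} {k : ℕ}
    (hml : ∀ i, p.degreeOf i ≤ 1) (hhom : p.IsHomogeneous k) (hE : p.vars ⊆ E) :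
    #p.support ≤ (#E).choose k := by
  have hle : ∀ a ∈ p.support, ∀ i, a i ≤ 1 :=
    fun a ha i => (le_degreeOf_of_mem_support i ha).trans (hml i)
  calc #p.support ≤ #(E.powersetCard k) := by
        refine card_le_card_of_injOn Finsupp.support (fun a ha => ?_)
          fun a ha b hb hab => Finsupp.eq_of_support_eq_of_le_one (hle a ha) (hle b hb) hab
        refine mem_powersetCard.mpr ⟨(support_subset_vars_of_mem_support ha).trans hE, ?_⟩
        rw [← Finsupp.degree_eq_card_support_of_le_one (hle a ha), Finsupp.degree_eq_weight_one]
        exact hhom (mem_support_iff.mp ha)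
    _ = (#E).choose k := card_powersetCard k E

theorem card_support_mul_le_of_vars_subset [Fintype σ] [DecidableEq σ] [NoZeroDivisors R]
    {E : Finset σ} {d : ℕ} (hpq : p * q ≠ 0) (hml : ∀ i, (p * q).degreeOf i ≤ 1)
    (hhom : (p * q).IsHomogeneous d) (hp : p.vars ⊆ E) (hq : q.vars ⊆ Eᶜ) :
    ∃ k ∈ Icc (d - (Fintype.card σ - #E)) (min #E d),
      #(p * q).support ≤ (#E).choose k * (Fintype.card σ - #E).choose (d - k) := by
  have hdisj : Disjoint p.vars q.vars :=
    disjoint_of_subset_left hp (disjoint_of_subset_right hq disjoint_compl_right)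
  have hp0 : p ≠ 0 := left_ne_zero_of_mul hpq
  have hq0 : q ≠ 0 := right_ne_zero_of_mul hpq
  obtain ⟨k, hk⟩ := hhom.exists_isHomogeneous_left_of_disjoint_vars hdisj hq0
  obtain ⟨l, hl⟩ :=
    (mul_comm p q ▸ hhom).exists_isHomogeneous_left_of_disjoint_vars hdisj.symm hp0
  have hkl : k + l = d := (hk.mul hl).inj_right hhom hpq
  have hml_p i : p.degreeOf i ≤ 1 := by have := hml i; rw [degreeOf_mul_eq hp0 hq0] at this; omega
  have hml_q i : q.degreeOf i ≤ 1 := by have := hml i; rw [degreeOf_mul_eq hp0 hq0] at this; omega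
  have hbound : #(p * q).support ≤ (#E).choose k * (Fintype.card σ - #E).choose l :=
    calc #(p * q).support ≤ #(p.support + q.support) := card_le_card (support_mul p q)
      _ ≤ #p.support * #q.support := card_add_le
      _ ≤ (#E).choose k * (#Eᶜ).choose l :=
        Nat.mul_le_mul (card_support_le_choose hml_p hk hp) (card_support_le_choose hml_q hl hq)
      _ = (#E).choose k * (Fintype.card σ - #E).choose l := by rw [card_compl]
  have hpos := (card_pos.mpr (support_nonempty.mpr hpq)).trans_le hbound
  have hkE : ¬ #E < k := fun h => by simp [Nat.choose_eq_zero_iff.mpr h] at hpos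
  have hlE : ¬ Fintype.card σ - #E < l := fun h => by simp [Nat.choose_eq_zero_iff.mpr h] at hpos
  refine ⟨k, mem_Icc.mpr ⟨by omega, by omega⟩, ?_⟩
  rwa [← hkl, Nat.add_sub_cancel_left]

end MvPolynomial

/-- Theorem 2.1(iv)(b),(c): for a nonzero multilinear homogeneous
polynomial `F` of degree `d` with `t` monomials:
(b) if `F` splits across a nontrivial bipartition `(E,Eᶜ)` with `#E = α`, then
`t ≤ τ_α = max { C(α,d₁)·C(n−α,d−d₁) }`;
(c) if `t > τ = max_α τ_α`, then `F` splits across no nontrivial bipartition. -/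
theorem stmt_4 (n d : ℕ) (F : MvPolynomial (Fin n) ℂ) (hF : F ≠ 0)
    (hml : ∀ j, F.degreeOf j ≤ 1) (hhom : F.IsHomogeneous d) :
    (∀ E : Finset (Fin n), E.Nonempty → E ≠ Finset.univ →
        (∃ p q : MvPolynomial (Fin n) ℂ, F = p * q ∧ p.vars ⊆ E ∧ q.vars ⊆ Eᶜ) →
        F.support.card ≤
          (Finset.Icc (d - (n - E.card)) (min E.card d)).sup
            (fun d₁ => Nat.choose E.card d₁ * Nat.choose (n - E.card) (d - d₁))) ∧
    ((Finset.Icc 1 (n - 1)).sup (fun α =>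
          (Finset.Icc (d - (n - α)) (min α d)).sup
            (fun d₁ => Nat.choose α d₁ * Nat.choose (n - α) (d - d₁)))
        < F.support.card →
      ∀ E : Finset (Fin n), E.Nonempty → E ≠ Finset.univ →
        ¬ ∃ p q : MvPolynomial (Fin n) ℂ, F = p * q ∧ p.vars ⊆ E ∧ q.vars ⊆ Eᶜ) := by
  have split_bound : ∀ E : Finset (Fin n), E.Nonempty → E ≠ Finset.univ →
      (∃ p q : MvPolynomial (Fin n) ℂ, F = p * q ∧ p.vars ⊆ E ∧ q.vars ⊆ Eᶜ) →
      #F.support ≤ (Icc (d - (n - #E)) (min #E d)).sup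
        (fun d₁ => (#E).choose d₁ * (n - #E).choose (d - d₁)) := by
    rintro E - - ⟨p, q, rfl, hp, hq⟩
    obtain ⟨k, hk, hbound⟩ := card_support_mul_le_of_vars_subset hF hml hhom hp hq
    rw [Fintype.card_fin] at hk hbound
    exact le_sup_of_le hk hbound
  refine ⟨split_bound, fun hτ E hE hEu hsplit => hτ.not_ge ?_⟩
  have hα : #E ∈ Icc 1 (n - 1) := by
    have := card_lt_card (ssubset_univ_iff.mpr hEu)
    rw [card_univ, Fintype.card_fin] at this
    exact mem_Icc.mpr ⟨card_pos.mpr hE, by omega⟩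
  exact le_sup_of_le hα (split_bound E hE hEu hsplit)
end

section
/- Let F be a multilinear polynomial in ℂ[X_1,…,X_n] such that the number of monomials of F is a prime number and no variable X_j divides F. Then F is irreducible in ℂ[X_1,…,X_n]. -/
open MvPolynomial Finset

private lemma uniq_split {N : ℕ} {S T : Finset (Fin N)} (hST : Disjoint S T)
    {a c b d : Fin N →₀ ℕ} (ha : a.support ⊆ S) (hc : c.support ⊆ S)
    (hb : b.support ⊆ T) (hd : d.support ⊆ T) (h : a + b = c + d) :
    a = c ∧ b = d := by
  have key : ∀ j, a j = c j ∧ b j = d j := by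
    intro j
    have h' : a j + b j = c j + d j := by
      have := DFunLike.congr_fun h j
      simpa using this
    by_cases hj : j ∈ S
    · have hbj : b j = 0 := by
        by_contra hbj
        exact (hST.forall_ne_finset hj (hb (Finsupp.mem_support_iff.mpr hbj))) rfl
      have hdj : d j = 0 := by
        by_contra hdj
        exact (hST.forall_ne_finset hj (hd (Finsupp.mem_support_iff.mpr hdj))) rfl
      omega
    · have haj : a j = 0 := by
        by_contra haj
        exact hj (ha (Finsupp.mem_support_iff.mpr haj))
      have hcj : c j = 0 := by
        by_contra hcj
        exact hj (hc (Finsupp.mem_support_iff.mpr hcj))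
      omega
  exact ⟨Finsupp.ext fun j => (key j).1, Finsupp.ext fun j => (key j).2⟩

private lemma supp_sub_vars {N : ℕ} {p : MvPolynomial (Fin N) ℂ} {a : Fin N →₀ ℕ}
    (ha : a ∈ p.support) : a.support ⊆ p.vars :=
  fun i hi => (mem_vars i).mpr ⟨a, ha, hi⟩

private lemma coeff_mul_disj {N : ℕ} {p q : MvPolynomial (Fin N) ℂ}
    (hd : Disjoint p.vars q.vars) {a b : Fin N →₀ ℕ}
    (ha : a ∈ p.support) (hb : b ∈ q.support) :
    coeff (a + b) (p * q) = coeff a p * coeff b q := by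
  rw [coeff_mul]
  apply Finset.sum_eq_single_of_mem (a, b) (Finset.HasAntidiagonal.mem_antidiagonal.mpr rfl)
  intro x hx hne
  by_contra hcon
  have h1 : x.1 ∈ p.support := by
    rw [mem_support_iff]; intro h; apply hcon; rw [h, zero_mul]
  have h2 : x.2 ∈ q.support := by
    rw [mem_support_iff]; intro h; apply hcon; rw [h, mul_zero]
  have heq : x.1 + x.2 = a + b := Finset.HasAntidiagonal.mem_antidiagonal.mp hx
  obtain ⟨e1, e2⟩ := uniq_split hd (supp_sub_vars h1) (supp_sub_vars ha)
    (supp_sub_vars h2) (supp_sub_vars hb) heq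
  exact hne (Prod.ext e1 e2)

private lemma support_mul_disj {N : ℕ} {p q : MvPolynomial (Fin N) ℂ}
    (hd : Disjoint p.vars q.vars) :
    (p * q).support = (p.support ×ˢ q.support).image (fun x => x.1 + x.2) := by
  apply Finset.Subset.antisymm
  · intro m hm
    have := MvPolynomial.support_mul p q hm
    rw [Finset.mem_add] at this
    obtain ⟨a, ha, b, hb, hab⟩ := this
    exact Finset.mem_image.mpr ⟨(a, b), Finset.mem_product.mpr ⟨ha, hb⟩, hab⟩
  · intro m hm
    obtain ⟨⟨a, b⟩, hab, rfl⟩ := Finset.mem_image.mp hm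
    obtain ⟨ha, hb⟩ := Finset.mem_product.mp hab
    rw [mem_support_iff, coeff_mul_disj hd ha hb]
    exact mul_ne_zero (mem_support_iff.mp ha) (mem_support_iff.mp hb)

private lemma card_mul_disj {N : ℕ} {p q : MvPolynomial (Fin N) ℂ}
    (hd : Disjoint p.vars q.vars) :
    (p * q).support.card = p.support.card * q.support.card := by
  rw [support_mul_disj hd, Finset.card_image_of_injOn, Finset.card_product]
  intro x hx y hy hxy
  obtain ⟨hx1, hx2⟩ := Finset.mem_product.mp hx
  obtain ⟨hy1, hy2⟩ := Finset.mem_product.mp hy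
  obtain ⟨e1, e2⟩ := uniq_split hd (supp_sub_vars hx1) (supp_sub_vars hy1)
    (supp_sub_vars hx2) (supp_sub_vars hy2) hxy
  exact Prod.ext e1 e2

private lemma degreeOf_mul_eq_add {m : ℕ} (j : Fin (m + 1))
    (p q : MvPolynomial (Fin (m + 1)) ℂ) (hp : p ≠ 0) (hq : q ≠ 0) :
    degreeOf j (p * q) = degreeOf j p + degreeOf j q := by
  have hinj : Function.Injective
      (fun r : MvPolynomial (Fin (m + 1)) ℂ =>
        MvPolynomial.finSuccEquiv ℂ m (rename (Equiv.swap j 0) r)) :=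
    (MvPolynomial.finSuccEquiv ℂ m).injective.comp
      (rename_injective _ (Equiv.swap j 0).injective)
  have key : ∀ r : MvPolynomial (Fin (m + 1)) ℂ,
      degreeOf j r = (MvPolynomial.finSuccEquiv ℂ m (rename (Equiv.swap j 0) r)).natDegree := by
    intro r
    have h2 := degreeOf_rename_of_injective (R := ℂ) (p := r) (Equiv.swap j 0).injective j
    rw [Equiv.swap_apply_left] at h2
    rw [natDegree_finSuccEquiv, h2]
  rw [key, key, key]
  simp only [map_mul]
  apply Polynomial.natDegree_mul
  · intro h0
    exact hp (hinj (by simpa using h0))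
  · intro h0
    exact hq (hinj (by simpa using h0))

private lemma unit_of_card_one {N : ℕ} {F p : MvPolynomial (Fin N) ℂ}
    (hndvd : ∀ j, ¬ (X j ∣ F)) (hpd : p ∣ F) (h1 : p.support.card = 1) :
    IsUnit p := by
  obtain ⟨a, ha⟩ := Finset.card_eq_one.mp h1
  have hmem : a ∈ p.support := ha ▸ Finset.mem_singleton_self a
  have hc : coeff a p ≠ 0 := mem_support_iff.mp hmem
  have hpm : p = monomial a (coeff a p) := by
    conv_lhs => rw [p.as_sum, ha, Finset.sum_singleton]
  by_cases h0 : a = 0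
  · subst h0
    rw [hpm, monomial_zero']
    exact (isUnit_iff_ne_zero.mpr hc).map (C : ℂ →+* MvPolynomial (Fin N) ℂ)
  · exfalso
    obtain ⟨j, hj⟩ : ∃ j, a j ≠ 0 := by
      by_contra hall
      push_neg at hall
      exact h0 (Finsupp.ext hall)
    apply hndvd j
    exact dvd_trans (X_dvd_monomial.mpr (Or.inr hj)) (hpm ▸ hpd)

/-- Example 2.2(iv),(v)(b): a multilinear polynomial with a prime
number of monomials, not divisible by any variable, is irreducible. -/
theorem stmt_5 (n : ℕ) (F : MvPolynomial (Fin n) ℂ)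
    (hml : ∀ j, F.degreeOf j ≤ 1)
    (hprime : Nat.Prime F.support.card)
    (hndvd : ∀ j, ¬ (X j ∣ F)) :
    Irreducible F := by
  have hF0 : F ≠ 0 := by
    intro h
    rw [h] at hprime
    simp at hprime
    exact Nat.not_prime_zero hprime
  constructor
  · -- F is not a unit
    intro hu
    obtain ⟨G, hG⟩ := hu.exists_right_inv
    have hG0 : G ≠ 0 := by
      rintro rfl
      rw [mul_zero] at hG
      exact zero_ne_one hG
    have hsub : F.support ⊆ {0} := by
      intro mm hmm
      rw [Finset.mem_singleton]
      ext j
      obtain ⟨k, rfl⟩ : ∃ k, n = k + 1 := ⟨n - 1, by have := j.pos; omega⟩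
      have hdeg := degreeOf_mul_eq_add j F G hF0 hG0
      rw [hG, ← MvPolynomial.C_1, degreeOf_C] at hdeg
      have hm := monomial_le_degreeOf j hmm
      simp only [Finsupp.coe_zero, Pi.zero_apply]
      omega
    have hle := Finset.card_le_card hsub
    simp only [Finset.card_singleton] at hle
    have := hprime.two_le
    omega
  · intro p q h
    by_contra hcon
    push_neg at hcon
    obtain ⟨hnp, hnq⟩ := hcon
    have hp0 : p ≠ 0 := by rintro rfl; rw [zero_mul] at h; exact hF0 h
    have hq0 : q ≠ 0 := by rintro rfl; rw [mul_zero] at h; exact hF0 h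
    have hdisj : Disjoint p.vars q.vars := by
      rw [Finset.disjoint_left]
      by_contra hnd
      push_neg at hnd
      obtain ⟨j, hjp, hjq⟩ := hnd
      obtain ⟨m, rfl⟩ : ∃ m, n = m + 1 := ⟨n - 1, by have := j.pos; omega⟩
      have h1 : 1 ≤ degreeOf j p := by
        obtain ⟨d, hd, hjd⟩ := (mem_vars j).mp hjp
        calc 1 ≤ d j := Nat.one_le_iff_ne_zero.mpr (Finsupp.mem_support_iff.mp hjd)
          _ ≤ degreeOf j p := monomial_le_degreeOf j hd
      have h2 : 1 ≤ degreeOf j q := by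
        obtain ⟨d, hd, hjd⟩ := (mem_vars j).mp hjq
        calc 1 ≤ d j := Nat.one_le_iff_ne_zero.mpr (Finsupp.mem_support_iff.mp hjd)
          _ ≤ degreeOf j q := monomial_le_degreeOf j hd
      have := hml j
      rw [h, degreeOf_mul_eq_add j p q hp0 hq0] at this
      omega
    have hcard : F.support.card = p.support.card * q.support.card := by
      rw [h]; exact card_mul_disj hdisj
    rw [hcard] at hprime
    rcases Nat.prime_mul_iff.mp hprime with ⟨_, hq1⟩ | ⟨_, hp1⟩
    · exact hnq (unit_of_card_one hndvd ⟨p, by rw [h, mul_comm]⟩ hq1)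
    · exact hnp (unit_of_card_one hndvd ⟨q, h⟩ hp1)
end
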